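/- Let L ≥ 2 be an integer and μ_1, …, μ_L, μ_min real numbers with μ_t ≥ μ_min > 0 for all t. Define J(p) = Σ_{t=1}^{L} μ_t (1-p)^{t-1} and F(θ) = J(σ(θ)), and let θ : ℝ → ℝ be differentiable with θ'(s) = F'(θ(s)) for all s ≥ 0. Then there exist constants S > 0 and K > 0 such that the stopping probability p(s) = σ(θ(s)) satisfies p(s) ≤ K/s for all s ≥ S. -/

import Mathlib

open Finset

noncomputable def sigmoid (x : ℝ) : ℝ := 1 / (1 + Real.exp (-x))

lemma sig_denom_pos (x : ℝ) : 0 < 1 + Real.exp (-x) := by positivity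

lemma sigmoid_pos (x : ℝ) : 0 < sigmoid x := by
  unfold sigmoid; positivity

lemma sigmoid_lt_one (x : ℝ) : sigmoid x < 1 := by
  unfold sigmoid
  rw [div_lt_one (sig_denom_pos x)]
  linarith [Real.exp_pos (-x)]

lemma hasDerivAt_sigmoid (x : ℝ) :
    HasDerivAt sigmoid (sigmoid x * (1 - sigmoid x)) x := by
  have h1 : HasDerivAt (fun y : ℝ => -y) (-1) x := (hasDerivAt_id x).neg
  have h2 : HasDerivAt (fun y : ℝ => Real.exp (-y)) (Real.exp (-x) * (-1)) x :=
    (Real.hasDerivAt_exp (-x)).comp x h1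
  have h3 : HasDerivAt (fun y : ℝ => 1 + Real.exp (-y)) (Real.exp (-x) * (-1)) x :=
    h2.const_add 1
  have h4 := h3.fun_inv (ne_of_gt (sig_denom_pos x))
  have hfun : sigmoid = fun y : ℝ => (1 + Real.exp (-y))⁻¹ := by
    funext y; simp [sigmoid, one_div]
  rw [hfun]
  refine h4.congr_deriv ?_
  have hd := (sig_denom_pos x).ne'
  beta_reduce
  field_simp
  ring

/-- Under gradient flow `θ'(s) = F'(θ(s))` with `F(θ) = J(σ(θ))` and
`J(p) = ∑_{t=1}^L μ_t (1-p)^{t-1}`, `μ_t ≥ μ_min > 0`: there exist constants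
`S > 0` and `K > 0` such that the stopping probability `p(s) = σ(θ(s))` satisfies
`p(s) ≤ K / s` for all `s ≥ S`. -/
theorem stopping_prob_decay_rate
    (L : ℕ) (hL : 2 ≤ L) (μ : ℕ → ℝ) (μmin : ℝ)
    (hμmin : 0 < μmin) (hμ : ∀ t ∈ Finset.Icc 1 L, μmin ≤ μ t)
    (J F : ℝ → ℝ)
    (hJ : ∀ q : ℝ, J q = ∑ t ∈ Finset.Icc 1 L, μ t * (1 - q) ^ (t - 1))
    (hF : ∀ x : ℝ, F x = J (sigmoid x))
    (θ : ℝ → ℝ) (hθ : Differentiable ℝ θ)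
    (hflow : ∀ s : ℝ, 0 ≤ s → deriv θ s = deriv F (θ s))
    (p : ℝ → ℝ) (hp : ∀ s, p s = sigmoid (θ s)) :
    ∃ S > (0 : ℝ), ∃ K > (0 : ℝ), ∀ s ≥ S, p s ≤ K / s := by
  -- derivative of J
  set D : ℝ → ℝ := fun q =>
    ∑ t ∈ Finset.Icc 1 L, μ t * (((t - 1 : ℕ) : ℝ) * (1 - q) ^ (t - 1 - 1) * (-1)) with hD
  have hJfun : J = fun q => ∑ t ∈ Finset.Icc 1 L, μ t * (1 - q) ^ (t - 1) := funext hJ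
  have hJd : ∀ q : ℝ, HasDerivAt J (D q) q := by
    intro q
    rw [hJfun]
    exact HasDerivAt.fun_sum fun t _ =>
      ((((hasDerivAt_id q).const_sub 1).fun_pow (t - 1)).const_mul (μ t))
  -- D q ≤ -μmin on [0,1]
  have hDle : ∀ q : ℝ, 0 ≤ q → q ≤ 1 → D q ≤ -μmin := by
    intro q hq0 hq1
    have h2mem : 2 ∈ Finset.Icc 1 L := by simp [Finset.mem_Icc]; omega
    have hDq : D q = ∑ t ∈ Finset.Icc 1 L, μ t * (((t - 1 : ℕ) : ℝ) * (1 - q) ^ (t - 1 - 1) * (-1)) := rfl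
    rw [hDq, ← Finset.add_sum_erase _ _ h2mem]
    have hle2 : μ 2 * (((2 - 1 : ℕ) : ℝ) * (1 - q) ^ (2 - 1 - 1) * (-1)) = -μ 2 := by
      norm_num
    rw [hle2]
    have hrest : ∑ t ∈ (Finset.Icc 1 L).erase 2,
        μ t * (((t - 1 : ℕ) : ℝ) * (1 - q) ^ (t - 1 - 1) * (-1)) ≤ 0 := by
      apply Finset.sum_nonpos
      intro t ht
      have htm := Finset.mem_of_mem_erase ht
      have hμt : 0 < μ t := lt_of_lt_of_le hμmin (hμ t htm)
      have h1q : (0:ℝ) ≤ 1 - q := by linarith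
      have : (0:ℝ) ≤ μ t * (((t - 1 : ℕ) : ℝ) * (1 - q) ^ (t - 1 - 1)) := by positivity
      nlinarith
    have := hμ 2 h2mem
    linarith
  -- derivative of p
  have hpfun : p = fun s => sigmoid (θ s) := funext hp
  have hpd : ∀ s : ℝ, HasDerivAt p (p s * (1 - p s) * deriv θ s) s := by
    intro s
    have base := (hasDerivAt_sigmoid (θ s)).comp s (hθ s).hasDerivAt
    rw [hpfun]
    exact base
  have hpos : ∀ s, 0 < p s := fun s => by rw [hp s]; exact sigmoid_pos _
  have hlt1 : ∀ s, p s < 1 := fun s => by rw [hp s]; exact sigmoid_lt_one _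
  -- deriv F
  have hFfun : F = fun x => J (sigmoid x) := funext hF
  have hFd : ∀ x : ℝ, HasDerivAt F (D (sigmoid x) * (sigmoid x * (1 - sigmoid x))) x := by
    intro x
    rw [hFfun]
    exact (hJd (sigmoid x)).comp x (hasDerivAt_sigmoid x)
  -- deriv p formula on s ≥ 0
  have hderivp : ∀ s : ℝ, 0 ≤ s →
      deriv p s = p s * (1 - p s) * (D (p s) * (p s * (1 - p s))) := by
    intro s hs
    rw [(hpd s).deriv, hflow s hs, (hFd (θ s)).deriv, ← hp s]
  -- deriv p ≤ -μmin (p(1-p))²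
  have hderivp_le : ∀ s : ℝ, 0 ≤ s →
      deriv p s ≤ -μmin * (p s * (1 - p s)) ^ 2 := by
    intro s hs
    rw [hderivp s hs]
    have hD' := hDle (p s) (hpos s).le (hlt1 s).le
    nlinarith [sq_nonneg (p s * (1 - p s))]
  have hdiffp : Differentiable ℝ p := fun s => (hpd s).differentiableAt
  -- p antitone on Ici 0
  have hanti : AntitoneOn p (Set.Ici (0:ℝ)) := by
    apply antitoneOn_of_deriv_nonpos (convex_Ici 0) hdiffp.continuous.continuousOn
      (hdiffp.differentiableOn)
    intro x hx
    rw [interior_Ici] at hx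
    have hle := hderivp_le x (le_of_lt hx)
    nlinarith [sq_nonneg (p x * (1 - p x))]
  set ε : ℝ := 1 - p 0 with hε
  have hεpos : 0 < ε := by have := hlt1 0; simp [hε]; linarith
  set c : ℝ := μmin * ε ^ 2 with hc
  have hcpos : 0 < c := by positivity
  -- key: deriv p s ≤ -c (p s)^2 for s ≥ 0
  have hkey : ∀ s : ℝ, 0 ≤ s → deriv p s ≤ -c * (p s) ^ 2 := by
    intro s hs
    have hmono : p s ≤ p 0 := hanti (Set.self_mem_Ici) (Set.mem_Ici.mpr hs) hs
    have h1 : ε ≤ 1 - p s := by rw [hε]; linarith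
    have hle := hderivp_le s hs
    have hps := hpos s
    have hsq : ε ^ 2 ≤ (1 - p s) ^ 2 := by nlinarith
    have h3 : μmin * ((p s) ^ 2 * ε ^ 2) ≤ μmin * ((p s) ^ 2 * (1 - p s) ^ 2) := by
      apply mul_le_mul_of_nonneg_left _ hμmin.le
      exact mul_le_mul_of_nonneg_left hsq (sq_nonneg _)
    calc deriv p s ≤ -μmin * (p s * (1 - p s)) ^ 2 := hle
      _ = -(μmin * ((p s) ^ 2 * (1 - p s) ^ 2)) := by ring
      _ ≤ -(μmin * ((p s) ^ 2 * ε ^ 2)) := by linarith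
      _ = -c * (p s) ^ 2 := by rw [hc]; ring
  -- h := 1/p - c s is monotone on Ici 0
  set h : ℝ → ℝ := fun s => (p s)⁻¹ - c * s with hh
  have hhd : ∀ s : ℝ, HasDerivAt h (-(deriv p s) / (p s) ^ 2 - c) s := by
    intro s
    have h1 := ((hpd s).deriv ▸ (hpd s)).inv (hpos s).ne'
    have h2 : HasDerivAt (fun s : ℝ => c * s) c s := by
      simpa using (hasDerivAt_id s).const_mul c
    exact h1.sub h2
  have hmono : MonotoneOn h (Set.Ici (0:ℝ)) := by
    apply monotoneOn_of_deriv_nonneg (convex_Ici 0)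
    · exact (Differentiable.continuous (fun s => ((hhd s).differentiableAt))).continuousOn
    · exact fun s _ => ((hhd s).differentiableAt).differentiableWithinAt
    · intro x hx
      rw [interior_Ici] at hx
      rw [(hhd x).deriv]
      have hk := hkey x hx.le
      have hps2 : 0 < (p x) ^ 2 := pow_pos (hpos x) 2
      rw [sub_nonneg, le_div_iff₀ hps2]
      nlinarith
  refine ⟨1, one_pos, c⁻¹, inv_pos.mpr hcpos, fun s hs => ?_⟩
  have hs0 : (0:ℝ) ≤ s := by linarith
  have hge : h 0 ≤ h s := hmono Set.self_mem_Ici (Set.mem_Ici.mpr hs0) hs0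
  have h0 : 0 ≤ (p 0)⁻¹ := (inv_pos.mpr (hpos 0)).le
  have hinvge : c * s ≤ (p s)⁻¹ := by
    have e0 : h 0 = (p 0)⁻¹ := by simp [hh]
    have es : h s = (p s)⁻¹ - c * s := rfl
    rw [e0, es] at hge
    linarith
  have hcs : 0 < c * s := mul_pos hcpos (by linarith)
  have := inv_anti₀ hcs hinvge
  rw [inv_inv] at this
  calc p s ≤ (c * s)⁻¹ := this
    _ = c⁻¹ / s := by rw [mul_inv, div_eq_mul_inv]
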